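/- U(N) = Σ_{n₁ ≤ N} μ(n₁)² · Σ_{n₂n₃ ≤ N/n₁} #{a ≥ 1 : a | n₂ + n₃ and gcd(a, n₁n₂n₃) = 1}, where U(N) = Σ_a Σ_{n ≤ N, gcd(n,a)=1} R(n;a). -/

import Mathlib

/-!
Clearing denominators, `a / n = 1 / x + 1 / y` reads `a x y = n (x + y)`. Write `x = g x'`,
`y = g y'` with `g = gcd(x, y)`; since `x'` and `y'` are coprime to `x' + y'`, we get `n = m x' y'`
and `a g = m (x' + y')`, so `a ∣ x' + y'` once `(a, n) = 1`. Splitting `m = n₁ t²` with `n₁`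
squarefree, the solutions correspond bijectively to the triples `(n₁, q₁, q₂) = (n₁, t x', t y')`
with `n₁` squarefree, `n₁ q₁ q₂ = n` and `a ∣ q₁ + q₂`, through `x = n₁ q₁ c`, `y = n₁ q₂ c`,
`a c = q₁ + q₂`; injectivity comes from `x + y = a n₁ c²` and the uniqueness of the
squarefree-times-square decomposition. Summing over `n ≤ N` and then swapping the sums over `a`
and over the triples gives the formula, `μ(n₁)²` being the indicator of squarefree `n₁`.
-/

/-- `R(n; a)`: the number of ordered pairs `(x, y)` of positive integers with
`a/n = 1/x + 1/y`. -/
noncomputable def Rcount (n a : ℕ) : ℕ :=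
  Nat.card {p : ℕ × ℕ | 0 < p.1 ∧ 0 < p.2 ∧ (a : ℚ) / n = 1 / p.1 + 1 / p.2}

open Finset

lemma Nat.eq_and_eq_of_squarefree_mul_sq_eq {s t u v : ℕ} (hs : Squarefree s)
    (hu : Squarefree u) (ht : t ≠ 0) (hv : v ≠ 0) (h : s * t ^ 2 = u * v ^ 2) :
    s = u ∧ t = v := by
  have hsu : s = u := by
    refine Nat.eq_of_factorization_eq hs.ne_zero hu.ne_zero fun p => ?_
    have hp := congrArg (·.factorization p) h
    simp only [Nat.factorization_mul hs.ne_zero (pow_ne_zero 2 ht),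
      Nat.factorization_mul hu.ne_zero (pow_ne_zero 2 hv), Nat.factorization_pow,
      Finsupp.add_apply, Finsupp.smul_apply, smul_eq_mul] at hp
    have := hs.natFactorization_le_one p
    have := hu.natFactorization_le_one p
    omega
  subst hsu
  exact ⟨rfl, Nat.pow_left_injective two_ne_zero
    (Nat.eq_of_mul_eq_mul_left (Nat.pos_of_ne_zero hs.ne_zero) h)⟩

lemma div_eq_one_div_add_one_div_iff {n a x y : ℕ} (hn : n ≠ 0) (hx : x ≠ 0) (hy : y ≠ 0) :
    (a : ℚ) / n = 1 / x + 1 / y ↔ a * x * y = n * (x + y) := by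
  rw [div_add_div _ _ (by positivity) (by positivity), div_eq_div_iff (by positivity)
    (by positivity), ← Nat.cast_inj (R := ℚ)]
  push_cast
  constructor <;> intro h <;> linarith

def egyptianPairs (n a : ℕ) : Set (ℕ × ℕ) :=
  {p | 0 < p.1 ∧ 0 < p.2 ∧ a * p.1 * p.2 = n * (p.1 + p.2)}

lemma Rcount_eq_ncard_egyptianPairs {n : ℕ} (hn : n ≠ 0) (a : ℕ) :
    Rcount n a = (egyptianPairs n a).ncard := by
  rw [Rcount, ← Nat.card_coe_set_eq]
  congr 2
  ext ⟨x, y⟩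
  exact and_congr_right fun hx => and_congr_right fun hy =>
    div_eq_one_div_add_one_div_iff hn hx.ne' hy.ne'

lemma mul_mul_eq_mul_add_of_mul_eq {a n n₁ q₁ q₂ c : ℕ} (hn : n₁ * q₁ * q₂ = n)
    (hc : a * c = q₁ + q₂) :
    a * (n₁ * q₁ * c) * (n₁ * q₂ * c) = n * (n₁ * q₁ * c + n₁ * q₂ * c) := by
  subst hn
  calc _ = n₁ ^ 2 * q₁ * q₂ * c * (a * c) := by ring
    _ = _ := by rw [hc]; ring

lemma triple_eq_of_mul_eq_mul {a c d n₁ q₁ q₂ m₁ p₁ p₂ : ℕ}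
    (hn₁ : Squarefree n₁) (hm₁ : Squarefree m₁) (hq : q₁ + q₂ ≠ 0) (hp : p₁ + p₂ ≠ 0)
    (hc : a * c = q₁ + q₂) (hd : a * d = p₁ + p₂)
    (hx : n₁ * q₁ * c = m₁ * p₁ * d) (hy : n₁ * q₂ * c = m₁ * p₂ * d) :
    (n₁, q₁, q₂) = (m₁, p₁, p₂) := by
  have ha : a ≠ 0 := by rintro rfl; omega
  have hc0 : c ≠ 0 := by rintro rfl; omega
  have hd0 : d ≠ 0 := by rintro rfl; omega
  have hsum : a * (n₁ * c ^ 2) = a * (m₁ * d ^ 2) :=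
    calc a * (n₁ * c ^ 2) = n₁ * q₁ * c + n₁ * q₂ * c := by rw [← add_mul, ← mul_add, ← hc]; ring
      _ = m₁ * p₁ * d + m₁ * p₂ * d := by rw [hx, hy]
      _ = a * (m₁ * d ^ 2) := by rw [← add_mul, ← mul_add, ← hd]; ring
  obtain ⟨rfl, rfl⟩ := Nat.eq_and_eq_of_squarefree_mul_sq_eq hn₁ hm₁ hc0 hd0
    (Nat.eq_of_mul_eq_mul_left (Nat.pos_of_ne_zero ha) hsum)
  have hn₁c : 0 < n₁ * c := Nat.pos_of_ne_zero (mul_ne_zero hn₁.ne_zero hc0)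
  rw [Nat.eq_of_mul_eq_mul_right hn₁c (by linarith : q₁ * (n₁ * c) = p₁ * (n₁ * c)),
    Nat.eq_of_mul_eq_mul_right hn₁c (by linarith : q₂ * (n₁ * c) = p₂ * (n₁ * c))]

lemma exists_coprime_param_of_mul_eq {a n x y : ℕ} (ha : a ≠ 0) (hcop : n.Coprime a)
    (hx : 0 < x) (hy : 0 < y) (h : a * x * y = n * (x + y)) :
    ∃ m x' y' s, n = m * x' * y' ∧ a * s = x' + y' ∧ x = m * s * x' ∧ y = m * s * y' := by
  obtain ⟨g, x', y', hg, hxy, rfl, rfl⟩ := Nat.exists_coprime' (Nat.gcd_pos_of_pos_left y hx)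
  have hx' : x' ≠ 0 := by rintro rfl; simp at hx
  have hy' : y' ≠ 0 := by rintro rfl; simp at hy
  have hreduced : a * g * (x' * y') = n * (x' + y') := by
    refine Nat.eq_of_mul_eq_mul_left hg ?_
    linear_combination h
  have hdvd : x' * y' ∣ n := by
    refine hxy.mul_dvd_of_dvd_of_dvd ?_ ?_
    · exact (Nat.coprime_self_add_right.2 hxy).dvd_of_dvd_mul_right
        ⟨a * g * y', by rw [← hreduced]; ring⟩
    · exact (Nat.coprime_add_self_right.2 hxy.symm).dvd_of_dvd_mul_right
        ⟨a * g * x', by rw [← hreduced]; ring⟩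
  obtain ⟨m, rfl⟩ := hdvd
  have hag : a * g = m * (x' + y') := by
    refine Nat.eq_of_mul_eq_mul_left (Nat.pos_of_ne_zero (mul_ne_zero hx' hy')) ?_
    linear_combination hreduced
  obtain ⟨s, hs⟩ : a ∣ x' + y' :=
    ((Nat.Coprime.coprime_dvd_left (Dvd.intro_left _ rfl) hcop).symm).dvd_of_dvd_mul_left
      ⟨g, hag.symm⟩
  have hg : g = m * s := Nat.eq_of_mul_eq_mul_left (Nat.pos_of_ne_zero ha) (by
    linear_combination hag + m * hs)
  exact ⟨m, x', y', s, by ring, hs.symm, by rw [hg]; ring, by rw [hg]; ring⟩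

lemma exists_squarefree_triple_of_mul_eq {a n x y : ℕ} (ha : a ≠ 0) (hcop : n.Coprime a)
    (hx : 0 < x) (hy : 0 < y) (h : a * x * y = n * (x + y)) :
    ∃ n₁ q₁ q₂ c, Squarefree n₁ ∧ n₁ * q₁ * q₂ = n ∧ a * c = q₁ + q₂ ∧
      n₁ * q₁ * c = x ∧ n₁ * q₂ * c = y := by
  obtain ⟨m, x', y', s, rfl, hs, rfl, rfl⟩ := exists_coprime_param_of_mul_eq ha hcop hx hy h
  obtain ⟨n₁, t, rfl, hn₁⟩ := Nat.sq_mul_squarefree m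
  exact ⟨n₁, t * x', t * y', t * s, hn₁, by ring, by rw [mul_left_comm, hs, mul_add],
    by ring, by ring⟩

def egyptianTriples (n a : ℕ) : Set (ℕ × ℕ × ℕ) :=
  {t | Squarefree t.1 ∧ t.1 * t.2.1 * t.2.2 = n ∧ a ∣ t.2.1 + t.2.2}

lemma pos_of_mem_egyptianTriples {n a n₁ q₁ q₂ : ℕ} (ht : (n₁, q₁, q₂) ∈ egyptianTriples n a)
    (hn : n ≠ 0) : 0 < n₁ ∧ 0 < q₁ ∧ 0 < q₂ := by
  have hprod : 0 < n₁ * q₁ * q₂ := ht.2.1 ▸ Nat.pos_of_ne_zero hn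
  simp only [CanonicallyOrderedAdd.mul_pos] at hprod
  exact ⟨hprod.1.1, hprod.1.2, hprod.2⟩

lemma ncard_egyptianTriples {n a : ℕ} (hn : n ≠ 0) (ha : a ≠ 0) (hcop : n.Coprime a) :
    (egyptianTriples n a).ncard = (egyptianPairs n a).ncard := by
  refine Set.ncard_congr (fun t _ => (t.1 * t.2.1 * ((t.2.1 + t.2.2) / a),
    t.1 * t.2.2 * ((t.2.1 + t.2.2) / a))) ?_ ?_ ?_
  · rintro ⟨n₁, q₁, q₂⟩ ht
    obtain ⟨hn₁, hq₁, hq₂⟩ := pos_of_mem_egyptianTriples ht hn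
    have hc : 0 < (q₁ + q₂) / a := Nat.div_pos (Nat.le_of_dvd (by omega) ht.2.2) (by omega)
    exact ⟨by positivity, by positivity,
      mul_mul_eq_mul_add_of_mul_eq ht.2.1 (Nat.mul_div_cancel' ht.2.2)⟩
  · rintro ⟨n₁, q₁, q₂⟩ ⟨m₁, p₁, p₂⟩ ht hs h
    obtain ⟨-, hq₁, -⟩ := pos_of_mem_egyptianTriples ht hn
    obtain ⟨-, hp₁, -⟩ := pos_of_mem_egyptianTriples hs hn
    have hq : q₁ + q₂ ≠ 0 := by omega
    have hp : p₁ + p₂ ≠ 0 := by omega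
    simp only [Prod.mk.injEq] at h
    exact triple_eq_of_mul_eq_mul ht.1 hs.1 hq hp (Nat.mul_div_cancel' ht.2.2)
      (Nat.mul_div_cancel' hs.2.2) h.1 h.2
  · rintro ⟨x, y⟩ ⟨hx, hy, h⟩
    obtain ⟨n₁, q₁, q₂, c, hn₁, hprod, hc, rfl, rfl⟩ :=
      exists_squarefree_triple_of_mul_eq ha hcop hx hy h
    refine ⟨(n₁, q₁, q₂), ⟨hn₁, hprod, ⟨c, hc.symm⟩⟩, ?_⟩
    simp only [← hc, Nat.mul_div_cancel_left c (Nat.pos_of_ne_zero ha)]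

def squarefreeTriples (M : ℕ) : Finset (ℕ × ℕ × ℕ) :=
  (Icc 1 M ×ˢ Icc 1 M ×ˢ Icc 1 M).filter (fun t => Squarefree t.1 ∧ t.1 * t.2.1 * t.2.2 ≤ M)

lemma coe_filter_squarefreeTriples {M n : ℕ} (hn : n ≠ 0) (hnM : n ≤ M) (a : ℕ) :
    ↑((squarefreeTriples M).filter (fun t => t.1 * t.2.1 * t.2.2 = n ∧ a ∣ t.2.1 + t.2.2)) =
      egyptianTriples n a := by
  ext ⟨n₁, q₁, q₂⟩
  simp only [squarefreeTriples, coe_filter, mem_filter, mem_product, mem_Icc, Set.mem_ofPred_eq]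
  refine ⟨fun ⟨⟨_, hn₁, _⟩, hprod, hdvd⟩ => ⟨hn₁, hprod, hdvd⟩, fun ht => ?_⟩
  obtain ⟨hn₁, hq₁, hq₂⟩ := pos_of_mem_egyptianTriples ht hn
  obtain ⟨hsq, rfl, hdvd⟩ := ht
  have hle : ∀ d, d ∣ n₁ * q₁ * q₂ → d ≤ M := fun d hd =>
    (Nat.le_of_dvd (by positivity) hd).trans hnM
  exact ⟨⟨⟨⟨hn₁, hle _ ⟨q₁ * q₂, by ring⟩⟩, ⟨hq₁, hle _ ⟨n₁ * q₂, by ring⟩⟩,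
    ⟨hq₂, hle _ ⟨n₁ * q₁, by ring⟩⟩⟩, hsq, hnM⟩, rfl, hdvd⟩

lemma Rcount_eq_card_filter_squarefreeTriples {M n a : ℕ} (hn : n ≠ 0) (hnM : n ≤ M)
    (ha : a ≠ 0) (hcop : n.Coprime a) :
    Rcount n a = #{t ∈ squarefreeTriples M | t.1 * t.2.1 * t.2.2 = n ∧ a ∣ t.2.1 + t.2.2} := by
  rw [Rcount_eq_ncard_egyptianPairs hn, ← ncard_egyptianTriples hn ha hcop,
    ← coe_filter_squarefreeTriples hn hnM, Set.ncard_coe_finset]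

lemma sum_Rcount_eq_card_squarefreeTriples (M : ℕ) {a : ℕ} (ha : a ≠ 0) :
    ∑ n ∈ Icc 1 M, (if n.Coprime a then Rcount n a else 0) =
      #{t ∈ squarefreeTriples M | a ∣ t.2.1 + t.2.2 ∧ a.Coprime (t.1 * t.2.1 * t.2.2)} := by
  rw [card_eq_sum_card_fiberwise (f := fun t => t.1 * t.2.1 * t.2.2) (t := Icc 1 M)]
  · refine sum_congr rfl fun n hn => ?_
    obtain ⟨hn1, hnM⟩ := mem_Icc.1 hn
    rw [filter_filter]
    split_ifs with hcop
    · rw [Rcount_eq_card_filter_squarefreeTriples (by omega) hnM ha hcop]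
      exact congrArg card <| filter_congr fun t _ =>
        ⟨fun ⟨h1, h2⟩ => ⟨⟨h2, (h1 ▸ hcop).symm⟩, h1⟩, fun ⟨⟨h2, _⟩, h1⟩ => ⟨h1, h2⟩⟩
    · refine (card_eq_zero.2 (filter_eq_empty_iff.2 fun t _ h => ?_)).symm
      exact hcop (h.2 ▸ h.1.2.symm)
  · intro t ht
    simp only [squarefreeTriples, mem_coe, mem_filter, mem_product, mem_Icc] at ht
    obtain ⟨⟨⟨⟨h₁, -⟩, ⟨h₂, -⟩, ⟨h₃, -⟩⟩, -, hM⟩, -⟩ := ht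
    exact mem_Icc.2 ⟨Nat.one_le_iff_ne_zero.2 (by positivity), hM⟩

lemma add_mem_Icc_of_mem_squarefreeTriples {M : ℕ} {t : ℕ × ℕ × ℕ}
    (ht : t ∈ squarefreeTriples M) : t.2.1 + t.2.2 ∈ Icc 1 (2 * M) := by
  simp only [squarefreeTriples, mem_filter, mem_product, mem_Icc] at ht ⊢
  omega

lemma filter_Icc_dvd_eq_filter_divisors {s K : ℕ} (hs : s ∈ Icc 1 K) (p : ℕ → Prop)
    [DecidablePred p] : {a ∈ Icc 1 K | a ∣ s ∧ p a} = {a ∈ s.divisors | p a} := by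
  obtain ⟨hs1, hsK⟩ := mem_Icc.1 hs
  ext a
  simp only [mem_filter, mem_Icc, Nat.mem_divisors]
  constructor
  · rintro ⟨-, hdvd, hp⟩
    exact ⟨⟨hdvd, by omega⟩, hp⟩
  · rintro ⟨⟨hdvd, -⟩, hp⟩
    exact ⟨⟨Nat.pos_of_dvd_of_pos hdvd hs1, (Nat.le_of_dvd hs1 hdvd).trans hsK⟩, hdvd, hp⟩

lemma tsum_pnat_eq_sum_Icc {α : Type*} [AddCommMonoid α] [TopologicalSpace α] {f : ℕ → α}
    {K : ℕ} (hf : ∀ a, K < a → f a = 0) :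
    ∑' a : ℕ+, f a = ∑ a ∈ Icc 1 K, f a := by
  have hsupp : ∀ a : ℕ+, a ∉ (Icc 1 K).subtype (0 < ·) → f a = 0 := fun a ha =>
    hf a (not_le.1 fun haK => ha (mem_subtype.2 (mem_Icc.2 ⟨a.pos, haK⟩)))
  rw [tsum_eq_sum hsupp]
  exact sum_subtype_of_mem f fun a ha => (mem_Icc.1 ha).1

open ArithmeticFunction ArithmeticFunction.Moebius in
lemma sum_squarefreeTriples_eq (N : ℝ) (g : ℕ × ℕ × ℕ → ℝ) :
    ∑ t ∈ squarefreeTriples ⌊N⌋₊, g t = ∑ n₁ ∈ Icc 1 ⌊N⌋₊, (μ n₁ : ℝ) ^ 2 *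
      ∑ q ∈ (Icc 1 ⌊N⌋₊ ×ˢ Icc 1 ⌊N⌋₊).filter (fun q => (n₁ * q.1 * q.2 : ℝ) ≤ N),
        g (n₁, q.1, q.2) := by
  rw [squarefreeTriples, sum_filter, sum_product]
  refine sum_congr rfl fun n₁ hn₁ => ?_
  rw [sum_filter, mul_sum]
  refine sum_congr rfl fun q hq => ?_
  simp only [mem_product, mem_Icc] at hn₁ hq
  have hle : (n₁ * q.1 * q.2 : ℝ) ≤ N ↔ n₁ * q.1 * q.2 ≤ ⌊N⌋₊ := by
    rw [Nat.le_floor_iff' (mul_pos (mul_pos hn₁.1 hq.1.1) hq.2.1).ne']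
    push_cast
    rfl
  have hμ : (μ n₁ : ℝ) ^ 2 = if Squarefree n₁ then 1 else 0 := by
    rw [← Int.cast_pow, moebius_sq]
    split_ifs <;> simp
  simp only [hle, hμ]
  by_cases hsq : Squarefree n₁ <;> simp [hsq]

open ArithmeticFunction ArithmeticFunction.Moebius in
theorem U_eq_triple_sum_general (N : ℝ) :
    ∑' a : ℕ+, ((∑ n ∈ Finset.Icc 1 ⌊N⌋₊,
        if Nat.Coprime n a then Rcount n a else 0 : ℕ) : ℝ) =
      ∑ n₁ ∈ Finset.Icc 1 ⌊N⌋₊, ((μ n₁ : ℝ)) ^ 2 *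
        ∑ q ∈ (Finset.Icc 1 ⌊N⌋₊ ×ˢ Finset.Icc 1 ⌊N⌋₊).filter
            (fun q => (n₁ * q.1 * q.2 : ℝ) ≤ N),
          (((q.1 + q.2).divisors.filter
              (fun a => Nat.Coprime a (n₁ * q.1 * q.2))).card : ℝ) := by
  let T := squarefreeTriples ⌊N⌋₊
  let r : ℕ → ℕ × ℕ × ℕ → Prop := fun a t => a ∣ t.2.1 + t.2.2 ∧ a.Coprime (t.1 * t.2.1 * t.2.2)
  have hvanish : ∀ a, 2 * ⌊N⌋₊ < a → (#(T.bipartiteAbove r a) : ℝ) = 0 := by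
    refine fun a ha => Nat.cast_eq_zero.2 (card_eq_zero.2 (filter_eq_empty_iff.2 fun t ht h => ?_))
    have hs := mem_Icc.1 (add_mem_Icc_of_mem_squarefreeTriples ht)
    exact absurd ((Nat.le_of_dvd hs.1 h.1).trans hs.2) (not_le.2 ha)
  calc _ = ∑' a : ℕ+, (#(T.bipartiteAbove r a) : ℝ) :=
        tsum_congr fun a => by rw [sum_Rcount_eq_card_squarefreeTriples _ a.ne_zero]; rfl
    _ = ∑ a ∈ Icc 1 (2 * ⌊N⌋₊), (#(T.bipartiteAbove r a) : ℝ) := tsum_pnat_eq_sum_Icc hvanish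
    _ = ∑ t ∈ T, (#((Icc 1 (2 * ⌊N⌋₊)).bipartiteBelow r t) : ℝ) := by
        exact_mod_cast sum_card_bipartiteAbove_eq_sum_card_bipartiteBelow r
    _ = ∑ t ∈ T, (#{a ∈ (t.2.1 + t.2.2).divisors | a.Coprime (t.1 * t.2.1 * t.2.2)} : ℝ) :=
        sum_congr rfl fun t ht => by
          rw [bipartiteBelow, filter_Icc_dvd_eq_filter_divisors
            (add_mem_Icc_of_mem_squarefreeTriples ht)]
    _ = _ := sum_squarefreeTriples_eq N _

open ArithmeticFunction ArithmeticFunction.Moebius in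
/-- `U(N) = Σ_{n₁ ≤ N} μ(n₁)² Σ_{n₂n₃ ≤ N/n₁} #{a ≥ 1 : a ∣ n₂+n₃, (a, n₁n₂n₃)=1}`, where
`U(N) = Σ_a Σ_{n ≤ N, (n,a)=1} R(n;a)`. -/
theorem U_eq_triple_sum (N : ℝ) (hN : 0 < N) :
    ∑' a : ℕ+, ((∑ n ∈ Finset.Icc 1 ⌊N⌋₊,
        if Nat.Coprime n a then Rcount n a else 0 : ℕ) : ℝ) =
      ∑ n₁ ∈ Finset.Icc 1 ⌊N⌋₊, ((μ n₁ : ℝ)) ^ 2 *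
        ∑ q ∈ (Finset.Icc 1 ⌊N⌋₊ ×ˢ Finset.Icc 1 ⌊N⌋₊).filter
            (fun q => (n₁ * q.1 * q.2 : ℝ) ≤ N),
          (((q.1 + q.2).divisors.filter
              (fun a => Nat.Coprime a (n₁ * q.1 * q.2))).card : ℝ) :=
  U_eq_triple_sum_general N
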